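/- arXiv:2008.10558 — 7 statements merged into one kernel-verified Lean document; each statement's English description precedes it below -/
import Mathlib

section
/- Let F be a non-vanishing entire function on ℂ such that there exist constants A, B > 0 and m ∈ ℕ with |F(z)| ≤ A·e^{B·r^m} for all z with |z| < r and all r > 0. Then there exists a polynomial p with deg(p) ≤ m such that F(z) = e^{p(z)} for all z ∈ ℂ. -/
/-!
Since `F` has no zeros it has an entire logarithm `g`, and the growth bound says
`Re g ≤ log A + B r ^ m` on `‖z‖ < r`. Borel–Carathéodory turns this one-sided bound into
`‖g z‖ = O((1 + ‖z‖) ^ m)`, and Cauchy's estimates then kill every Taylor coefficient of `g`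
beyond degree `m`.
-/

open Complex Metric Filter

theorem Differentiable.exists_differentiable_eq_exp {F : ℂ → ℂ} (hF : Differentiable ℂ F)
    (hF₀ : ∀ z, F z ≠ 0) : ∃ g : ℂ → ℂ, Differentiable ℂ g ∧ ∀ z, F z = Complex.exp (g z) := by
  obtain ⟨g, hg₀, hg⟩ := (hF.deriv.div hF hF₀).isExactOn_univ.with_val_at 0 (Complex.log (F 0))
  have hg' : ∀ z, HasDerivAt g (_root_.deriv F z / F z) z := fun z => hg z (Set.mem_univ z)
  -- `F / exp g` has logarithmic derivative `F' / F - g' = 0`.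
  have hderiv : ∀ z, HasDerivAt (fun w => F w * Complex.exp (-g w)) 0 z := fun z => by
    refine ((hF z).hasDerivAt.mul (hg' z).neg.cexp).congr_deriv ?_
    field_simp [hF₀ z]
    ring
  have hdiff : Differentiable ℂ fun w => F w * Complex.exp (-g w) := fun z =>
    (hderiv z).differentiableAt
  refine ⟨g, fun z => (hg' z).differentiableAt, fun z => ?_⟩
  have hconst := is_const_of_deriv_eq_zero hdiff (fun w => (hderiv w).deriv) z 0
  rw [hg₀, Complex.exp_neg, Complex.exp_neg, Complex.exp_log (hF₀ 0), mul_inv_cancel₀ (hF₀ 0),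
    mul_inv_eq_one₀ (Complex.exp_ne_zero _)] at hconst
  exact hconst

theorem Differentiable.exists_norm_le_of_re_le {g : ℂ → ℂ} (hg : Differentiable ℂ g)
    {a B : ℝ} (hB : 0 ≤ B) {m : ℕ}
    (hre : ∀ r : ℝ, 0 < r → ∀ z : ℂ, ‖z‖ < r → (g z).re ≤ a + B * r ^ m) :
    ∃ C : ℝ, ∀ z, ‖g z‖ ≤ C * (1 + ‖z‖) ^ m := by
  refine ⟨2 * (|a| + 1) + 3 * ‖g 0‖ + 2 ^ (m + 1) * B, fun z => ?_⟩
  set ρ := 1 + ‖z‖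
  have hρ : 1 ≤ ρ := le_add_of_nonneg_right (norm_nonneg z)
  set M := |a| + 1 + B * (2 * ρ) ^ m
  have hmaps : Set.MapsTo g (ball 0 (2 * ρ)) {w | w.re ≤ M} := fun w hw =>
    (hre _ (by positivity) w (mem_ball_zero_iff.mp hw)).trans (by linarith [le_abs_self a])
  have hz : z ∈ ball 0 (2 * ρ) := mem_ball_zero_iff.mpr (by linarith)
  -- Borel–Carathéodory on the disc of radius `2ρ`, where `2ρ - ‖z‖ = 2 + ‖z‖`.
  have hfactor₁ : ‖z‖ / (2 * ρ - ‖z‖) ≤ 1 := by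
    rw [div_le_one (by linarith)]; linarith
  have hfactor₃ : (2 * ρ + ‖z‖) / (2 * ρ - ‖z‖) ≤ 3 := by
    rw [div_le_iff₀ (by linarith)]; linarith [norm_nonneg z]
  calc ‖g z‖ ≤ 2 * M * ‖z‖ / (2 * ρ - ‖z‖) + ‖g 0‖ * (2 * ρ + ‖z‖) / (2 * ρ - ‖z‖) :=
        borelCaratheodory (by positivity) hg.differentiableOn hmaps (by positivity) hz
    _ ≤ 2 * M * 1 + ‖g 0‖ * 3 := by
        rw [mul_div_assoc, mul_div_assoc]; gcongr
    _ = 2 * (|a| + 1) + 3 * ‖g 0‖ + 2 ^ (m + 1) * B * ρ ^ m := by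
        simp only [M, mul_pow, pow_succ]; ring
    _ ≤ (2 * (|a| + 1) + 3 * ‖g 0‖ + 2 ^ (m + 1) * B) * ρ ^ m := by
        have hpow : 1 ≤ ρ ^ m := one_le_pow₀ hρ
        nlinarith [abs_nonneg a, norm_nonneg (g 0)]

theorem Differentiable.iteratedDeriv_eq_zero_of_norm_le {E : Type*} [NormedAddCommGroup E]
    [NormedSpace ℂ E] [CompleteSpace E] {f : ℂ → E} {C : ℝ} {m : ℕ} (hf : Differentiable ℂ f)
    (hbound : ∀ z, ‖f z‖ ≤ C * (1 + ‖z‖) ^ m) {n : ℕ} (hn : m < n) :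
    iteratedDeriv n f 0 = 0 := by
  have hC : 0 ≤ C := by simpa using (norm_nonneg _).trans (hbound 0)
  have hcauchy : ∀ R : ℝ, 1 ≤ R → ‖iteratedDeriv n f 0‖ ≤ n.factorial * C * 2 ^ m / R := by
    intro R hR
    have hsphere : ∀ z ∈ sphere (0 : ℂ) R, ‖f z‖ ≤ C * (2 * R) ^ m := fun z hz => by
      rw [mem_sphere_zero_iff_norm] at hz
      exact (hbound z).trans (by gcongr; linarith)
    calc ‖iteratedDeriv n f 0‖ ≤ n.factorial * (C * (2 * R) ^ m) / R ^ n :=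
          norm_iteratedDeriv_le_of_forall_mem_sphere_norm_le n (by linarith) hf.diffContOnCl hsphere
      _ ≤ n.factorial * (C * (2 * R) ^ m) / R ^ (m + 1) := by gcongr; exact hn
      _ = n.factorial * C * 2 ^ m / R := by field_simp; ring
  refine norm_le_zero_iff.mp <|
    ge_of_tendsto (tendsto_const_div_atTop_nhds_zero_nat (n.factorial * C * 2 ^ m)) ?_
  filter_upwards [eventually_ge_atTop 1] with k hk
  exact hcauchy k (mod_cast hk)

theorem Differentiable.exists_polynomial_eq_of_norm_le {f : ℂ → ℂ} {C : ℝ} {m : ℕ}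
    (hf : Differentiable ℂ f) (hbound : ∀ z, ‖f z‖ ≤ C * (1 + ‖z‖) ^ m) :
    ∃ p : Polynomial ℂ, p.degree ≤ m ∧ ∀ z, f z = p.eval z := by
  set a : ℕ → ℂ := fun n => (n.factorial : ℂ)⁻¹ * iteratedDeriv n f 0
  refine ⟨∑ i : Fin (m + 1), Polynomial.C (a i) * Polynomial.X ^ (i : ℕ),
    Order.le_of_lt_succ (Polynomial.degree_sum_fin_lt _), fun z => ?_⟩
  have htaylor : HasSum (fun n => a n * z ^ n) (f z) := by
    simpa [a, mul_assoc, mul_comm (z ^ _)] using Complex.hasSum_taylorSeries_of_entire hf 0 z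
  have hvanish : ∀ n ∉ Finset.range (m + 1), a n * z ^ n = 0 := fun n hn => by
    simp [a, hf.iteratedDeriv_eq_zero_of_norm_le hbound (by simpa using hn)]
  simp [htaylor.unique (hasSum_sum_of_ne_finset_zero hvanish), Polynomial.eval_finsetSum,
    ← Fin.sum_univ_eq_sum_range]

/-- A non-vanishing entire function of order at most `m` growth is the exponential
of a polynomial of degree at most `m`. -/
theorem nonvanishing_entire_exp_polynomial
    (F : ℂ → ℂ) (hF : Differentiable ℂ F) (hnz : ∀ z, F z ≠ 0)
    (A B : ℝ) (hA : 0 < A) (hB : 0 < B) (m : ℕ)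
    (hgrowth : ∀ r : ℝ, 0 < r → ∀ z : ℂ, ‖z‖ < r → ‖F z‖ ≤ A * Real.exp (B * r ^ m)) :
    ∃ p : Polynomial ℂ, p.degree ≤ m ∧ ∀ z : ℂ, F z = Complex.exp (p.eval z) := by
  obtain ⟨g, hg, hFg⟩ := hF.exists_differentiable_eq_exp hnz
  have hre : ∀ r : ℝ, 0 < r → ∀ z : ℂ, ‖z‖ < r → (g z).re ≤ Real.log A + B * r ^ m := by
    intro r hr z hz
    rw [← Real.exp_le_exp, Real.exp_add, Real.exp_log hA, ← Complex.norm_exp, ← hFg]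
    exact hgrowth r hr z hz
  obtain ⟨C, hC⟩ := hg.exists_norm_le_of_re_le hB.le hre
  obtain ⟨p, hp, hgp⟩ := hg.exists_polynomial_eq_of_norm_le hC
  exact ⟨p, hp, fun z => by rw [hFg, hgp]⟩
end

section
/- Let G : ℂⁿ → ℂ be an entire function in n variables such that Re(G(z)) ≤ A + B·r^m whenever all coordinates of z have modulus less than r, for all r > 0. Then G is a polynomial of total degree at most m. -/
/-!
Restricted to a complex line `s ↦ G (s • z)`, the Borel–Carathéodory inequality turns the
one-sided bound on `Re G` into a two-sided one, `‖G z‖ ≤ C (1 + ‖z‖) ^ m`. In one variable,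
Cauchy's estimates on large circles then kill every Taylor coefficient of order `> m`. In
several variables we induct on the dimension: in the first coordinate,
`G (t, w) = ∑_{j ≤ m} a_j(w) t ^ j`, where each `a_j` is entire because Lagrange interpolation
writes it as a fixed linear combination of the slices `G (i, ·)`, `i = 0, …, m`, and Cauchy's
estimate on the circle of radius `1 + ‖w‖` gives `‖a_j(w)‖ ≤ C' (1 + ‖w‖) ^ (m - j)`.
-/

open Complex Metric Filter Finset Topology
open scoped Nat

namespace Complex

variable {f : ℂ → ℂ} {C : ℝ} {d : ℕ}

theorem iteratedDeriv_eq_zero_of_norm_le_mul_one_add_pow (hf : Differentiable ℂ f)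
    (hb : ∀ z, ‖f z‖ ≤ C * (1 + ‖z‖) ^ d) {k : ℕ} (hk : d < k) :
    iteratedDeriv k f 0 = 0 := by
  have hC : 0 ≤ C := by simpa using (norm_nonneg _).trans (hb 0)
  have hcauchy : ∀ ρ ≥ (1 : ℝ),
      ‖iteratedDeriv k f 0‖ ≤ k ! * C * 2 ^ d * (ρ ^ d / ρ ^ k) := by
    intro ρ hρ
    calc ‖iteratedDeriv k f 0‖ ≤ k ! * (C * (2 * ρ) ^ d) / ρ ^ k := by
          refine norm_iteratedDeriv_le_of_forall_mem_sphere_norm_le k (by linarith)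
            hf.diffContOnCl fun z hz ↦ (hb z).trans ?_
          rw [mem_sphere_zero_iff_norm.mp hz]
          gcongr
          linarith
      _ = k ! * C * 2 ^ d * (ρ ^ d / ρ ^ k) := by ring
  have hlim : Tendsto (fun ρ : ℝ ↦ k ! * C * 2 ^ d * (ρ ^ d / ρ ^ k)) atTop (𝓝 0) := by
    simpa using (tendsto_pow_div_pow_atTop_zero hk).const_mul (k ! * C * 2 ^ d)
  exact norm_le_zero_iff.mp <| ge_of_tendsto hlim <| (eventually_ge_atTop 1).mono hcauchy

theorem eq_sum_range_taylor_of_norm_le_mul_one_add_pow (hf : Differentiable ℂ f)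
    (hb : ∀ z, ‖f z‖ ≤ C * (1 + ‖z‖) ^ d) (z : ℂ) :
    f z = ∑ j ∈ range (d + 1), (j ! : ℂ)⁻¹ * iteratedDeriv j f 0 * z ^ j := by
  rw [← taylorSeries_eq_of_entire' hf (c := 0) (z := z), tsum_eq_sum (s := range (d + 1))]
  · simp
  · intro j hj
    rw [iteratedDeriv_eq_zero_of_norm_le_mul_one_add_pow hf hb (by simpa using hj)]
    simp

end Complex

open Polynomial in
theorem Polynomial.coeff_eq_sum_basis_coeff_mul_eval {F ι : Type*} [Field F] [DecidableEq ι]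
    {s : Finset ι} {v : ι → F} (hvs : Set.InjOn v s) {p : F[X]} (hp : p.degree < #s) (j : ℕ) :
    p.coeff j = ∑ i ∈ s, (Lagrange.basis s v i).coeff j * p.eval (v i) := by
  conv_lhs => rw [Lagrange.eq_interpolate hvs hp]
  simp [Lagrange.interpolate_apply, mul_comm]

open Polynomial in
theorem differentiable_coeff_of_forall_eq_sum_pow {𝕜 E : Type*} [NontriviallyNormedField 𝕜]
    [CharZero 𝕜] [NormedAddCommGroup E] [NormedSpace 𝕜 E] {F : E → 𝕜 → 𝕜}
    (hF : ∀ t, Differentiable 𝕜 (F · t)) {a : ℕ → E → 𝕜} {d j : ℕ} (hj : j ≤ d)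
    (hrep : ∀ w t, F w t = ∑ i ∈ range (d + 1), a i w * t ^ i) :
    Differentiable 𝕜 (a j) := by
  have hinterp : ∀ w, a j w = ∑ i ∈ range (d + 1),
      (Lagrange.basis (range (d + 1)) ((↑) : ℕ → 𝕜) i).coeff j * F w i := by
    intro w
    let p : 𝕜[X] := ∑ i ∈ range (d + 1), C (a i w) * X ^ i
    have hdeg : p.degree < #(range (d + 1)) := by
      rw [degree_lt_iff_coeff_zero]
      intro m hm
      rw [card_range] at hm
      simp [p, coeff_X_pow, show ¬m ≤ d by omega]
    have hcoeff : p.coeff j = a j w := by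
      simp [p, coeff_X_pow, hj.not_gt]
    have heval : ∀ t, p.eval t = F w t := by simp [p, hrep, eval_finsetSum]
    rw [← hcoeff, coeff_eq_sum_basis_coeff_mul_eval (Nat.cast_injective.injOn) hdeg]
    simp [heval]
  rw [funext hinterp]
  fun_prop

theorem norm_finCons_le {E : Type*} [SeminormedAddCommGroup E] {n : ℕ} (t : E) (w : Fin n → E) :
    ‖(Fin.cons t w : Fin (n + 1) → E)‖ ≤ max ‖t‖ ‖w‖ := by
  refine (pi_norm_le_iff_of_nonneg (by positivity)).mpr fun i ↦ ?_
  cases i using Fin.cases with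
  | zero => simp
  | succ i => simpa using Or.inr (norm_le_pi_norm w i)

open MvPolynomial in
theorem exists_mvPolynomial_eval_cons_eq_sum {R : Type*} [CommSemiring R] {n d : ℕ}
    (q : ℕ → MvPolynomial (Fin n) R) (hq : ∀ j ≤ d, (q j).totalDegree ≤ d - j) :
    ∃ p : MvPolynomial (Fin (n + 1)) R, p.totalDegree ≤ d ∧
      ∀ t w, eval (Fin.cons t w) p = ∑ j ∈ range (d + 1), eval w (q j) * t ^ j := by
  refine ⟨∑ j ∈ range (d + 1), rename Fin.succ (q j) * X 0 ^ j, ?_, fun t w ↦ by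
    simp [eval_rename]⟩
  refine (totalDegree_finsetSum _ _).trans (Finset.sup_le fun j hj ↦ ?_)
  have hjd : j ≤ d := Nat.lt_succ_iff.mp (mem_range.mp hj)
  have hX : (X 0 ^ j : MvPolynomial (Fin (n + 1)) R).totalDegree ≤ j := by
    simpa [X_pow_eq_monomial] using totalDegree_monomial_le (Finsupp.single 0 j) (1 : R)
  calc _ ≤ (rename Fin.succ (q j)).totalDegree + (X 0 ^ j).totalDegree := totalDegree_mul _ _
    _ ≤ (d - j) + j := add_le_add ((totalDegree_rename_le _ _).trans (hq j hjd)) hX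
    _ = d := Nat.sub_add_cancel hjd

section Slices

variable {n d : ℕ} {C : ℝ}

theorem norm_apply_finCons_le {E F : Type*} [SeminormedAddCommGroup E]
    [SeminormedAddCommGroup F] {H : (Fin (n + 1) → E) → F}
    (hb : ∀ z, ‖H z‖ ≤ C * (1 + ‖z‖) ^ d) (w : Fin n → E) (t : E) :
    ‖H (Fin.cons t w)‖ ≤ C * (1 + ‖w‖) ^ d * (1 + ‖t‖) ^ d := by
  have hC : 0 ≤ C := by simpa using (norm_nonneg _).trans (hb 0)
  calc ‖H (Fin.cons t w)‖ ≤ C * (1 + max ‖t‖ ‖w‖) ^ d := by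
        grw [hb, norm_finCons_le]
    _ ≤ C * ((1 + ‖w‖) * (1 + ‖t‖)) ^ d := by
        gcongr
        grw [max_le_add_of_nonneg (norm_nonneg t) (norm_nonneg w)]
        nlinarith [norm_nonneg t, norm_nonneg w]
    _ = C * (1 + ‖w‖) ^ d * (1 + ‖t‖) ^ d := by rw [mul_pow, mul_assoc]

theorem norm_taylorCoeff_finCons_le {H : (Fin (n + 1) → ℂ) → ℂ} (hH : Differentiable ℂ H)
    (hb : ∀ z, ‖H z‖ ≤ C * (1 + ‖z‖) ^ d) {j : ℕ} (hj : j ≤ d) (w : Fin n → ℂ) :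
    ‖(j ! : ℂ)⁻¹ * iteratedDeriv j (fun t ↦ H (Fin.cons t w)) 0‖ ≤
      C * 2 ^ d * (1 + ‖w‖) ^ (d - j) := by
  have hC : 0 ≤ C := by simpa using (norm_nonneg _).trans (hb 0)
  set ρ := 1 + ‖w‖
  have hρ0 : 0 < ρ := by positivity
  have hcauchy :
      ‖iteratedDeriv j (fun t ↦ H (Fin.cons t w)) 0‖ ≤ j ! * (C * (2 * ρ) ^ d) / ρ ^ j := by
    refine norm_iteratedDeriv_le_of_forall_mem_sphere_norm_le j hρ0
      (Differentiable.diffContOnCl (by fun_prop)) fun t ht ↦ ?_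
    rw [mem_sphere_zero_iff_norm] at ht
    calc ‖H (Fin.cons t w)‖ ≤ C * (1 + max ‖t‖ ‖w‖) ^ d := by grw [hb, norm_finCons_le]
      _ ≤ C * (2 * ρ) ^ d := by
          gcongr
          rw [ht, max_eq_left (by linarith)]
          linarith [norm_nonneg w]
  calc ‖(j ! : ℂ)⁻¹ * iteratedDeriv j (fun t ↦ H (Fin.cons t w)) 0‖
      = ‖iteratedDeriv j (fun t ↦ H (Fin.cons t w)) 0‖ / j ! := by simp [div_eq_inv_mul]
    _ ≤ j ! * (C * (2 * ρ) ^ d) / ρ ^ j / j ! := by gcongr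
    _ = C * 2 ^ d * ρ ^ (d - j) := by
        rw [mul_pow, ← pow_sub_mul_pow ρ hj]
        field_simp

end Slices

theorem exists_mvPolynomial_of_norm_le_mul_one_add_pow {n d : ℕ} {H : (Fin n → ℂ) → ℂ}
    (hH : Differentiable ℂ H) {C : ℝ} (hb : ∀ z, ‖H z‖ ≤ C * (1 + ‖z‖) ^ d) :
    ∃ p : MvPolynomial (Fin n) ℂ, p.totalDegree ≤ d ∧ ∀ z, H z = MvPolynomial.eval z p := by
  induction n generalizing d C with
  | zero => exact ⟨MvPolynomial.C (H 0), by simp, fun z ↦ by simp [Subsingleton.elim z 0]⟩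
  | succ n ih =>
    set a : ℕ → (Fin n → ℂ) → ℂ :=
      fun j w ↦ (j ! : ℂ)⁻¹ * iteratedDeriv j (fun t ↦ H (Fin.cons t w)) 0
    have hrep : ∀ w t, H (Fin.cons t w) = ∑ j ∈ range (d + 1), a j w * t ^ j := fun w t ↦
      eq_sum_range_taylor_of_norm_le_mul_one_add_pow (by fun_prop) (norm_apply_finCons_le hb w) t
    have hcoeff : ∀ j ≤ d, ∃ q : MvPolynomial (Fin n) ℂ, q.totalDegree ≤ d - j ∧
        ∀ w, a j w = MvPolynomial.eval w q := fun j hj ↦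
      ih (differentiable_coeff_of_forall_eq_sum_pow (fun t ↦ by fun_prop) hj hrep)
        (norm_taylorCoeff_finCons_le hH hb hj)
    choose! q hqdeg hqeval using hcoeff
    obtain ⟨p, hpdeg, hpeval⟩ := exists_mvPolynomial_eval_cons_eq_sum q hqdeg
    refine ⟨p, hpdeg, fun z ↦ ?_⟩
    rw [← Fin.cons_self_tail z, hrep, hpeval]
    exact sum_congr rfl fun j hj ↦ by rw [hqeval j (Nat.lt_succ_iff.mp (mem_range.mp hj))]

theorem exists_norm_le_mul_one_add_pow_of_re_le {E : Type*} [NormedAddCommGroup E]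
    [NormedSpace ℂ E] {G : E → ℂ} (hG : Differentiable ℂ G) {A B : ℝ} {m : ℕ}
    (hre : ∀ z, (G z).re ≤ A + B * (1 + ‖z‖) ^ m) :
    ∃ C, ∀ z, ‖G z‖ ≤ C * (1 + ‖z‖) ^ m := by
  refine ⟨2 * (|A| + 1 + |B| * 2 ^ m) + 3 * ‖G 0‖, fun z ↦ ?_⟩
  set M := |A| + 1 + |B| * 2 ^ m * (1 + ‖z‖) ^ m
  have hz1 : 1 ≤ (1 + ‖z‖) ^ m := one_le_pow₀ (by simp)
  have hline : Set.MapsTo (fun s : ℂ ↦ G (s • z)) (ball 0 2) {w | w.re ≤ M} := by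
    intro s hs
    rw [mem_ball_zero_iff] at hs
    have hsz : 1 + ‖s • z‖ ≤ 2 * (1 + ‖z‖) := by
      rw [norm_smul]
      nlinarith [norm_nonneg z]
    calc (G (s • z)).re ≤ A + B * (1 + ‖s • z‖) ^ m := hre _
      _ ≤ |A| + |B| * (1 + ‖s • z‖) ^ m := by
          gcongr
          exacts [le_abs_self A, le_abs_self B]
      _ ≤ |A| + |B| * (2 * (1 + ‖z‖)) ^ m := by gcongr
      _ ≤ M := by rw [mul_pow]; linarith
  have hbc := borelCaratheodory (z := 1) (by positivity) (by fun_prop) hline two_pos (by simp)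
  norm_num at hbc
  have := mul_le_mul_of_nonneg_left hz1 (by positivity : 0 ≤ 2 * (|A| + 1) + 3 * ‖G 0‖)
  linarith

/-- An entire function on `ℂⁿ` whose real part is bounded by `A + B r^m` on polydiscs
of radius `r` is a polynomial of total degree at most `m`. -/
theorem entire_several_variables_re_growth_polynomial
    (n : ℕ) (G : (Fin n → ℂ) → ℂ) (hG : Differentiable ℂ G)
    (A B : ℝ) (m : ℕ)
    (hgrowth : ∀ r : ℝ, 0 < r → ∀ z : Fin n → ℂ, (∀ i, ‖z i‖ < r) →
      (G z).re ≤ A + B * r ^ m) :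
    ∃ p : MvPolynomial (Fin n) ℂ, p.totalDegree ≤ m ∧
      ∀ z : Fin n → ℂ, G z = MvPolynomial.eval z p := by
  have hre : ∀ z, (G z).re ≤ A + B * (1 + ‖z‖) ^ m := fun z ↦
    hgrowth _ (by positivity) z fun i ↦ (norm_le_pi_norm z i).trans_lt (lt_one_add _)
  obtain ⟨C, hC⟩ := exists_norm_le_mul_one_add_pow_of_re_le hG hre
  exact exists_mvPolynomial_of_norm_le_mul_one_add_pow hG hC
end

section
/- Let X be a Banach space of functions on an open set D ⊆ ℂⁿ with polynomials dense and shift operators S_i bounded. Suppose b ∈ ℂⁿ is such that the functional p ↦ p(b) on polynomials extends to a bounded linear functional on X. Then b lies in the right Harte spectrum of the tuple S = (S₁,…,Sₙ); that is, there do NOT exist bounded operators A₁,…,Aₙ on X with Σᵢ (Sᵢ − bᵢ·I)Aᵢ = I. -/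
theorem ContinuousLinearMap.eq_zero_of_comp_eq_zero_of_sum_comp_eq_id
    {R M N ι : Type*} [Semiring R] [TopologicalSpace M] [AddCommMonoid M] [Module R M]
    [ContinuousAdd M] [TopologicalSpace N] [AddCommMonoid N] [Module R N] [ContinuousAdd N]
    [Fintype ι] (Λ : M →L[R] N) (T A : ι → M →L[R] M) (hΛ : ∀ i, Λ.comp (T i) = 0)
    (hTA : ∑ i, (T i).comp (A i) = ContinuousLinearMap.id R M) : Λ = 0 := by
  calc Λ = Λ.comp (∑ i, (T i).comp (A i)) := by rw [hTA, Λ.comp_id]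
    _ = 0 := by simp only [Λ.comp_finsetSum, ← ContinuousLinearMap.comp_assoc, hΛ,
      ContinuousLinearMap.zero_comp, Finset.sum_const_zero]

section PointEvaluation

variable {n : ℕ} {E : Type*} [NormedAddCommGroup E] [NormedSpace ℂ E]
  {J : E →ₗ[ℂ] ((Fin n → ℂ) → ℂ)}

theorem shift_apply_eq_eval_X_mul {S : E →L[ℂ] E} {i : Fin n}
    (hS : ∀ (x : E) (z : Fin n → ℂ), J (S x) z = z i * J x z)
    {p : MvPolynomial (Fin n) ℂ} {x : E} (hx : J x = fun z => MvPolynomial.eval z p) :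
    J (S x) = fun z => MvPolynomial.eval z (MvPolynomial.X i * p) := by
  funext z
  rw [hS, hx, MvPolynomial.eval_mul, MvPolynomial.eval_X]

-- On polynomials this is `(zᵢ p)(b) = bᵢ p(b)`; polynomials are dense.
theorem pointEval_comp_shift_sub_eq_zero {S : E →L[ℂ] E} {i : Fin n}
    (hS : ∀ (x : E) (z : Fin n → ℂ), J (S x) z = z i * J x z)
    (hdense : Dense {x : E | ∃ p : MvPolynomial (Fin n) ℂ, J x = fun z => MvPolynomial.eval z p})
    {b : Fin n → ℂ} {Λ : E →L[ℂ] ℂ}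
    (hΛ : ∀ (p : MvPolynomial (Fin n) ℂ) (x : E),
      (J x = fun z => MvPolynomial.eval z p) → Λ x = MvPolynomial.eval b p) :
    Λ.comp (S - b i • ContinuousLinearMap.id ℂ E) = 0 := by
  refine DFunLike.coe_injective
    (Continuous.ext_on hdense (map_continuous _) (map_continuous 0) ?_)
  rintro x ⟨p, hx⟩
  have hSx : Λ (S x) = b i * MvPolynomial.eval b p := by
    rw [hΛ _ _ (shift_apply_eq_eval_X_mul hS hx), MvPolynomial.eval_mul, MvPolynomial.eval_X]
  simp [hSx, hΛ p x hx]

end PointEvaluation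

theorem bounded_point_evaluation_mem_right_harte_spectrum_general
    (n : ℕ) (X : Type*) [NormedAddCommGroup X] [NormedSpace ℂ X]
    (J : X →ₗ[ℂ] ((Fin n → ℂ) → ℂ))
    (hpoly : ∀ p : MvPolynomial (Fin n) ℂ, ∃ x : X, J x = fun z => MvPolynomial.eval z p)
    (hdense : Dense {x : X | ∃ p : MvPolynomial (Fin n) ℂ, J x = fun z => MvPolynomial.eval z p})
    (S : Fin n → X →L[ℂ] X) (hS : ∀ i (x : X) (z : Fin n → ℂ), J (S i x) z = z i * J x z)
    (b : Fin n → ℂ)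
    (hb : ∃ Λ : X →L[ℂ] ℂ, ∀ (p : MvPolynomial (Fin n) ℂ) (x : X),
      (J x = fun z => MvPolynomial.eval z p) → Λ x = MvPolynomial.eval b p) :
    ¬ ∃ A : Fin n → (X →L[ℂ] X),
      (∑ i, ((S i) - (b i) • (ContinuousLinearMap.id ℂ X)).comp (A i)) =
        ContinuousLinearMap.id ℂ X := by
  rintro ⟨A, hA⟩
  obtain ⟨Λ, hΛ⟩ := hb
  obtain ⟨one, hone⟩ := hpoly 1
  have hΛ_one : Λ one = 1 := by rw [hΛ 1 one hone, map_one]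
  have hΛ_zero : Λ = 0 := Λ.eq_zero_of_comp_eq_zero_of_sum_comp_eq_id _ A
    (fun i => pointEval_comp_shift_sub_eq_zero (hS i) hdense hΛ) hA
  simp [hΛ_zero] at hΛ_one

/-- If point evaluation at `b` on polynomials extends to a bounded linear functional,
then `b` lies in the right Harte spectrum of the shift tuple. -/
theorem bounded_point_evaluation_mem_right_harte_spectrum
    (n : ℕ) (X : Type*) [NormedAddCommGroup X] [NormedSpace ℂ X] [CompleteSpace X]
    (J : X →ₗ[ℂ] ((Fin n → ℂ) → ℂ)) (hJ : Function.Injective J)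
    (D : Set (Fin n → ℂ)) (hD : IsOpen D)
    (hpoly : ∀ p : MvPolynomial (Fin n) ℂ, ∃ x : X, J x = fun z => MvPolynomial.eval z p)
    (hdense : Dense {x : X | ∃ p : MvPolynomial (Fin n) ℂ, J x = fun z => MvPolynomial.eval z p})
    (S : Fin n → X →L[ℂ] X) (hS : ∀ i (x : X) (z : Fin n → ℂ), J (S i x) z = z i * J x z)
    (b : Fin n → ℂ)
    (hb : ∃ Λ : X →L[ℂ] ℂ, ∀ (p : MvPolynomial (Fin n) ℂ) (x : X),
      (J x = fun z => MvPolynomial.eval z p) → Λ x = MvPolynomial.eval b p) :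
    ¬ ∃ A : Fin n → (X →L[ℂ] X),
      (∑ i, ((S i) - (b i) • (ContinuousLinearMap.id ℂ X)).comp (A i)) =
        ContinuousLinearMap.id ℂ X :=
  bounded_point_evaluation_mem_right_harte_spectrum_general n X J hpoly hdense S hS b hb
end

section
/- Fix 1 ≤ p < ∞ and n ≥ 1. If Λ is a nonzero bounded linear functional on H^p(𝔻ⁿ) such that Λ(p) = a·p(b) for all polynomials p, where a ≠ 0 and b ∈ closure(𝔻ⁿ), then b ∈ 𝔻ⁿ (i.e., |b_i| < 1 for all i). -/
/-!
If `‖b i‖ = 1`, the polynomials `P_m(z) = ((1 + conj (b i) * z i) / 2) ^ m` satisfy `P_m(b) = 1`,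
so `Λ P_m = a` for every `m`, while `‖P_m‖_{H^p} → 0`. Indeed, writing `z i = r e^{it}` with
`0 ≤ r ≤ 1`, convexity of the norm in `r` bounds `|(1 + conj (b i) * z i) / 2|` by
`max (1/2) |(1 + conj (b i) e^{it}) / 2|`, which is `< 1` except at the single point
`e^{it} = b i`; dominated convergence then sends the integral means of `|P_m|^p` to `0`
uniformly in `r`. Boundedness of `Λ` forces `a = 0`.
-/

open MeasureTheory

/-- Open unit polydisc in `ℂⁿ`. -/
def polydisc (n : ℕ) : Set (Fin n → ℂ) := {z | ∀ i, ‖z i‖ < 1}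

/-- The `p`-th power integral mean of `f` over the torus of radius `r`
(with normalized measure). -/
noncomputable def hardyMean (p : ℝ) (n : ℕ) (f : (Fin n → ℂ) → ℂ) (r : ℝ) : ℝ :=
  ∫ θ : Fin n → ℝ in Set.univ.pi (fun _ => Set.Ico (0 : ℝ) (2 * Real.pi)),
    ‖f (fun i => r * Complex.exp (Complex.I * θ i))‖ ^ p / (2 * Real.pi) ^ n

/-- The Hardy space `H^p` norm of `f` on the polydisc. -/
noncomputable def hardyNorm (p : ℝ) (n : ℕ) (f : (Fin n → ℂ) → ℂ) : ℝ :=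
  (⨆ r : Set.Ico (0 : ℝ) 1, hardyMean p n f r) ^ (1 / p)

/-- Membership in the Hardy space `H^p(𝔻ⁿ)`. -/
def MemHardy (p : ℝ) (n : ℕ) (f : (Fin n → ℂ) → ℂ) : Prop :=
  DifferentiableOn ℂ f (polydisc n) ∧
    ∃ M : ℝ, ∀ r ∈ Set.Ico (0 : ℝ) 1, hardyMean p n f r ≤ M

/-- A function `f ∈ H^p(𝔻ⁿ)` is (shift-)cyclic if the polynomial multiples of `f`
are dense in `H^p(𝔻ⁿ)`. -/
def HardyCyclic (p : ℝ) (n : ℕ) (f : (Fin n → ℂ) → ℂ) : Prop :=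
  MemHardy p n f ∧ ∀ h : (Fin n → ℂ) → ℂ, MemHardy p n h → ∀ ε : ℝ, 0 < ε →
    ∃ q : MvPolynomial (Fin n) ℂ,
      hardyNorm p n (fun z => h z - MvPolynomial.eval z q * f z) < ε

open Real Complex Filter Topology Set ComplexConjugate

theorem norm_add_smul_le_max {E : Type*} [SeminormedAddCommGroup E] [NormedSpace ℝ E]
    (x y : E) {r : ℝ} (hr : r ∈ Icc (0 : ℝ) 1) : ‖x + r • y‖ ≤ max ‖x‖ ‖x + y‖ := by
  refine convexOn_univ_norm.le_max_of_mem_segment (mem_univ x) (mem_univ (x + y)) ?_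
  refine ⟨1 - r, r, by linarith [hr.2], hr.1, by ring, ?_⟩
  rw [smul_add, ← add_assoc, ← add_smul]
  simp

theorem Complex.norm_one_add_lt_two {w : ℂ} (hw : ‖w‖ = 1) (hne : w ≠ 1) : ‖1 + w‖ < 2 := by
  refine lt_of_le_of_ne ((norm_add_le 1 w).trans_eq (by rw [norm_one, hw]; norm_num))
    fun h => hne ?_
  exact (eq_of_norm_eq_of_norm_add_eq (by rw [norm_one, hw]) (by rw [h, norm_one, hw]; norm_num)).symm

theorem countable_setOf_exp_mul_I_eq (w : ℂ) : {t : ℝ | exp (I * t) = w}.Countable := by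
  rcases eq_empty_or_nonempty {t : ℝ | exp (I * t) = w} with h | ⟨t₀, ht₀⟩
  · simp [h]
  refine (countable_range fun k : ℤ => t₀ + k * (2 * π)).mono fun t ht => ?_
  obtain ⟨k, hk⟩ := Complex.exp_eq_exp_iff_exists_int.mp (ht.trans ht₀.symm)
  have : (t : ℂ) = t₀ + k * (2 * π) := mul_left_cancel₀ I_ne_zero (by rw [hk]; ring)
  exact ⟨k, by exact_mod_cast this.symm⟩

theorem MeasureTheory.Measure.pi_const_smul {ι : Type*} [Fintype ι] {α : Type*}
    [MeasurableSpace α] (μ : Measure α) [SigmaFinite μ] (c : ENNReal) [SigmaFinite (c • μ)] :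
    Measure.pi (fun _ : ι => c • μ) = c ^ Fintype.card ι • Measure.pi (fun _ : ι => μ) := by
  refine Measure.pi_eq fun s hs => ?_
  simp [Measure.pi_pi, Finset.prod_mul_distrib]

theorem tendsto_integral_pow_of_ae_lt_one {α : Type*} [MeasurableSpace α] {μ : Measure α}
    [IsFiniteMeasure μ] {g : α → ℝ} (hg : AEStronglyMeasurable g μ) (h0 : ∀ x, 0 ≤ g x)
    (h1 : ∀ x, g x ≤ 1) (hlt : ∀ᵐ x ∂μ, g x < 1) :
    Tendsto (fun m : ℕ => ∫ x, g x ^ m ∂μ) atTop (𝓝 0) := by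
  have hdom : ∀ m : ℕ, ∀ᵐ x ∂μ, ‖g x ^ m‖ ≤ 1 := fun m => ae_of_all _ fun x => by
    rw [norm_pow, Real.norm_of_nonneg (h0 x)]
    exact pow_le_one₀ (h0 x) (h1 x)
  simpa using tendsto_integral_of_dominated_convergence (fun _ => 1) (fun m => hg.pow m)
    (integrable_const 1) hdom
    (hlt.mono fun x hx => tendsto_pow_atTop_nhds_zero_of_lt_one (h0 x) hx)

noncomputable def circleMeasure : Measure ℝ :=
  (ENNReal.ofReal (2 * π))⁻¹ • volume.restrict (Ico 0 (2 * π))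

instance : IsProbabilityMeasure circleMeasure := by
  constructor
  rw [circleMeasure, Measure.smul_apply, Measure.restrict_apply_univ, Real.volume_Ico, sub_zero,
    smul_eq_mul, ENNReal.inv_mul_cancel (by simp [pi_pos]) ENNReal.ofReal_ne_top]

theorem hardyMean_eq_integral_pi (p : ℝ) (n : ℕ) (f : (Fin n → ℂ) → ℂ) (r : ℝ) :
    hardyMean p n f r = ∫ θ, ‖f (fun i => r * exp (I * θ i))‖ ^ p
      ∂Measure.pi fun _ => circleMeasure := by
  have : SigmaFinite ((ENNReal.ofReal (2 * π))⁻¹ • volume.restrict (Ico 0 (2 * π))) :=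
    inferInstanceAs (SigmaFinite circleMeasure)
  rw [hardyMean, integral_div, circleMeasure, Measure.pi_const_smul, integral_smul_measure,
    ← Measure.restrict_pi_pi, ← volume_pi]
  simp only [Fintype.card_fin, ENNReal.toReal_pow, ENNReal.toReal_inv,
    ENNReal.toReal_ofReal two_pi_pos.le, smul_eq_mul, div_eq_inv_mul, inv_pow]

theorem hardyMean_nonneg (p : ℝ) (n : ℕ) (f : (Fin n → ℂ) → ℂ) (r : ℝ) :
    0 ≤ hardyMean p n f r :=
  integral_nonneg fun _ => by positivity

theorem hardyNorm_nonneg (p : ℝ) (n : ℕ) (f : (Fin n → ℂ) → ℂ) : 0 ≤ hardyNorm p n f :=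
  Real.rpow_nonneg (Real.iSup_nonneg fun _ => hardyMean_nonneg p n f _) _

theorem hardyNorm_le_of_hardyMean_le {p : ℝ} (hp : 0 < p) {n : ℕ} {f : (Fin n → ℂ) → ℂ} {B : ℝ}
    (hB : ∀ r ∈ Ico (0 : ℝ) 1, hardyMean p n f r ≤ B) : hardyNorm p n f ≤ B ^ (1 / p) :=
  Real.rpow_le_rpow (Real.iSup_nonneg fun _ => hardyMean_nonneg p n f _)
    (ciSup_le fun r => hB r r.2) (by positivity)

noncomputable def peakPoly {σ : Type*} (i : σ) (β : ℂ) (m : ℕ) : MvPolynomial σ ℂ :=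
  (MvPolynomial.C (1 / 2) * (1 + MvPolynomial.C (conj β) * MvPolynomial.X i)) ^ m

section PeakPoly

variable {σ : Type*} (i : σ) {β : ℂ} (m : ℕ)

theorem eval_peakPoly (z : σ → ℂ) :
    MvPolynomial.eval z (peakPoly i β m) = ((1 + conj β * z i) / 2) ^ m := by
  simp [peakPoly, div_eq_inv_mul]

theorem eval_peakPoly_of_eq (hβ : ‖β‖ = 1) {z : σ → ℂ} (hz : z i = β) :
    MvPolynomial.eval z (peakPoly i β m) = 1 := by
  rw [eval_peakPoly, hz, mul_comm, mul_conj, normSq_eq_norm_sq, hβ]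
  norm_num

end PeakPoly

noncomputable def peakMajorant (β : ℂ) (t : ℝ) : ℝ :=
  max (1 / 2) ‖(1 + conj β * exp (I * t)) / 2‖

section PeakMajorant

variable {β : ℂ}

theorem continuous_peakMajorant (β : ℂ) : Continuous (peakMajorant β) := by
  unfold peakMajorant; fun_prop

theorem peakMajorant_pos (β : ℂ) (t : ℝ) : 0 < peakMajorant β t :=
  lt_max_of_lt_left (by norm_num)

theorem norm_conj_mul_exp_I_mul (hβ : ‖β‖ = 1) (t : ℝ) : ‖conj β * exp (I * t)‖ = 1 := by
  rw [norm_mul, RCLike.norm_conj, hβ, mul_comm, Complex.norm_exp_I_mul_ofReal, one_mul]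

theorem peakMajorant_le_one (hβ : ‖β‖ = 1) (t : ℝ) : peakMajorant β t ≤ 1 := by
  refine max_le (by norm_num) ?_
  rw [norm_div, RCLike.norm_ofNat, div_le_one two_pos]
  exact (norm_add_le _ _).trans (by rw [norm_one, norm_conj_mul_exp_I_mul hβ]; norm_num)

theorem peakMajorant_lt_one (hβ : ‖β‖ = 1) {t : ℝ} (ht : exp (I * t) ≠ β) :
    peakMajorant β t < 1 := by
  have hne : conj β * exp (I * t) ≠ 1 := fun h => ht <|
    calc exp (I * t) = (β * conj β) * exp (I * t) := by
          rw [mul_conj, normSq_eq_norm_sq, hβ]; simp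
      _ = β * (conj β * exp (I * t)) := by ring
      _ = β := by rw [h, mul_one]
  refine max_lt (by norm_num) ?_
  rw [norm_div, RCLike.norm_ofNat, div_lt_one two_pos]
  exact Complex.norm_one_add_lt_two (norm_conj_mul_exp_I_mul hβ t) hne

theorem norm_peak_le_peakMajorant (t : ℝ) {r : ℝ} (hr : r ∈ Icc (0 : ℝ) 1) :
    ‖(1 + conj β * (r * exp (I * t))) / 2‖ ≤ peakMajorant β t :=
  calc ‖(1 + conj β * (r * exp (I * t))) / 2‖
      = ‖(1 / 2 : ℂ) + r • (conj β * exp (I * t) / 2)‖ := by rw [Complex.real_smul]; ring_nf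
    _ ≤ max ‖(1 / 2 : ℂ)‖ ‖1 / 2 + conj β * exp (I * t) / 2‖ := norm_add_smul_le_max _ _ hr
    _ = peakMajorant β t := by rw [peakMajorant, add_div]; norm_num

theorem ae_peakMajorant_lt_one (hβ : ‖β‖ = 1) : ∀ᵐ t ∂circleMeasure, peakMajorant β t < 1 := by
  have h := (countable_setOf_exp_mul_I_eq β).ae_notMem volume
  exact (Measure.ae_smul_measure (ae_restrict_of_ae h) _).mono fun t ht =>
    peakMajorant_lt_one hβ ht

theorem continuous_peakMajorant_rpow (β : ℂ) {p : ℝ} (hp : 0 ≤ p) :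
    Continuous fun t => peakMajorant β t ^ p :=
  (continuous_peakMajorant β).rpow_const fun _ => Or.inr hp

theorem peakMajorant_rpow_mem_Icc (hβ : ‖β‖ = 1) {p : ℝ} (hp : 0 ≤ p) (t : ℝ) :
    peakMajorant β t ^ p ∈ Icc (0 : ℝ) 1 :=
  ⟨Real.rpow_nonneg (peakMajorant_pos β t).le p,
    Real.rpow_le_one (peakMajorant_pos β t).le (peakMajorant_le_one hβ t) hp⟩

theorem integrable_peakMajorant_rpow_pow (hβ : ‖β‖ = 1) {p : ℝ} (hp : 0 ≤ p) (m : ℕ) :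
    Integrable (fun t => (peakMajorant β t ^ p) ^ m) circleMeasure := by
  refine .of_bound ((continuous_peakMajorant_rpow β hp).pow m).aestronglyMeasurable 1
    (ae_of_all _ fun t => ?_)
  obtain ⟨h0, h1⟩ := peakMajorant_rpow_mem_Icc hβ hp t
  rw [norm_pow, Real.norm_of_nonneg h0]
  exact pow_le_one₀ h0 h1

theorem tendsto_integral_peakMajorant_rpow_pow (hβ : ‖β‖ = 1) {p : ℝ} (hp : 0 < p) :
    Tendsto (fun m : ℕ => ∫ t, (peakMajorant β t ^ p) ^ m ∂circleMeasure) atTop (𝓝 0) :=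
  tendsto_integral_pow_of_ae_lt_one (continuous_peakMajorant_rpow β hp.le).aestronglyMeasurable
    (fun t => (peakMajorant_rpow_mem_Icc hβ hp.le t).1)
    (fun t => (peakMajorant_rpow_mem_Icc hβ hp.le t).2)
    ((ae_peakMajorant_lt_one hβ).mono fun t ht =>
      Real.rpow_lt_one (peakMajorant_pos β t).le ht hp)

end PeakMajorant

section HardyPeak

variable {p : ℝ} {n : ℕ} (i : Fin n) {β : ℂ}

theorem hardyMean_peakPoly_le (hβ : ‖β‖ = 1) (hp : 0 ≤ p) (m : ℕ) {r : ℝ}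
    (hr : r ∈ Icc (0 : ℝ) 1) :
    hardyMean p n (fun z => MvPolynomial.eval z (peakPoly i β m)) r ≤
      ∫ t, (peakMajorant β t ^ p) ^ m ∂circleMeasure := by
  simp only [hardyMean_eq_integral_pi, eval_peakPoly]
  rw [integral_comp_eval (μ := fun _ : Fin n => circleMeasure) (i := i)
    (f := fun t : ℝ => ‖((1 + conj β * (r * exp (I * t))) / 2) ^ m‖ ^ p) (by fun_prop)]
  refine integral_mono_of_nonneg (ae_of_all _ fun _ => by positivity) ?_ (ae_of_all _ fun t => ?_)
  · exact integrable_peakMajorant_rpow_pow hβ hp m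
  · dsimp only
    rw [norm_pow, ← Real.rpow_pow_comm (norm_nonneg _)]
    gcongr
    exact norm_peak_le_peakMajorant t hr

theorem memHardy_peakPoly (hβ : ‖β‖ = 1) (hp : 0 ≤ p) (m : ℕ) :
    MemHardy p n fun z => MvPolynomial.eval z (peakPoly i β m) := by
  refine ⟨?_, _, fun r hr => hardyMean_peakPoly_le i hβ hp m ⟨hr.1, hr.2.le⟩⟩
  simp only [eval_peakPoly]
  fun_prop

theorem tendsto_hardyNorm_peakPoly (hβ : ‖β‖ = 1) (hp : 0 < p) :
    Tendsto (fun m => hardyNorm p n fun z => MvPolynomial.eval z (peakPoly i β m))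
      atTop (𝓝 0) := by
  have hB := (tendsto_integral_peakMajorant_rpow_pow hβ hp).rpow_const (p := 1 / p)
    (Or.inr (by positivity))
  rw [Real.zero_rpow (by positivity)] at hB
  exact squeeze_zero (fun _ => hardyNorm_nonneg _ _ _) (fun m => hardyNorm_le_of_hardyMean_le hp
    fun r hr => hardyMean_peakPoly_le i hβ hp.le m ⟨hr.1, hr.2.le⟩) hB

end HardyPeak

theorem point_evaluation_functional_in_open_polydisc_general
    (p : ℝ) (hp : 1 ≤ p) (n : ℕ)
    (Λ : ((Fin n → ℂ) → ℂ) →ₗ[ℂ] ℂ)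
    (hbound : ∃ C : ℝ, ∀ f, MemHardy p n f → ‖Λ f‖ ≤ C * hardyNorm p n f)
    (a : ℂ) (ha : a ≠ 0) (b : Fin n → ℂ) (hb : ∀ i, ‖b i‖ ≤ 1)
    (hrep : ∀ q : MvPolynomial (Fin n) ℂ,
      Λ (fun z => MvPolynomial.eval z q) = a * MvPolynomial.eval b q) :
    ∀ i, ‖b i‖ < 1 := by
  intro i
  by_contra! hge
  have hbi : ‖b i‖ = 1 := (hb i).antisymm hge
  have hp0 : 0 < p := by linarith
  obtain ⟨C, hC⟩ := hbound
  have hle (m : ℕ) :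
      ‖a‖ ≤ C * hardyNorm p n fun z => MvPolynomial.eval z (peakPoly i (b i) m) := by
    simpa [hrep, eval_peakPoly_of_eq i m hbi rfl] using hC _ (memHardy_peakPoly i hbi hp0.le m)
  have hlim := (tendsto_hardyNorm_peakPoly i hbi hp0).const_mul C
  rw [mul_zero] at hlim
  exact ha (norm_le_zero_iff.mp (ge_of_tendsto' hlim hle))

/-- If a nonzero bounded linear functional on `H^p(𝔻ⁿ)` acts on polynomials as
`a ⬝ eval b` with `a ≠ 0` and `b` in the closed polydisc, then `b` lies in the
open polydisc. -/
theorem point_evaluation_functional_in_open_polydisc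
    (p : ℝ) (hp : 1 ≤ p) (n : ℕ) (hn : 1 ≤ n)
    (Λ : ((Fin n → ℂ) → ℂ) →ₗ[ℂ] ℂ)
    (hbound : ∃ C : ℝ, ∀ f, MemHardy p n f → ‖Λ f‖ ≤ C * hardyNorm p n f)
    (hnonzero : ∃ f, MemHardy p n f ∧ Λ f ≠ 0)
    (a : ℂ) (ha : a ≠ 0) (b : Fin n → ℂ) (hb : ∀ i, ‖b i‖ ≤ 1)
    (hrep : ∀ q : MvPolynomial (Fin n) ℂ,
      Λ (fun z => MvPolynomial.eval z q) = a * MvPolynomial.eval b q) :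
    ∀ i, ‖b i‖ < 1 :=
  point_evaluation_functional_in_open_polydisc_general p hp n Λ hbound a ha b hb hrep
end

section
/- Let X be a Banach space of functions on D̂ ⊆ ℂⁿ satisfying Q1–Q3 (polynomials dense; point evaluations bounded exactly at points of D̂; shifts bounded). Then for every w ∈ ℂⁿ, the function exp(w·z) is cyclic in X: the closed span of {p(z)·exp(w·z) : p polynomial} equals X. -/
/-!
The operator `A = ∑ wᵢ Sᵢ` acts through `J` as multiplication by `w·z`, so every polynomial in `A`
acts as multiplication by that polynomial in `w·z`. The same holds for `exp A` and `exp (w·z)` even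
though `J` is not continuous: `exp A - eᵗ = (A - t) H` for every scalar `t`, and at a point `z`
with `t = w·z` the factor `A - t` annihilates the value of `J`. Now approximate `y` by a polynomial
`p`; with `Pₘ` the truncations of the exponential series, `exp A (Pₘ(-A) p)` tends in norm to
`exp A (exp (-A) p) = p`, and `exp A (Pₘ(-A) p)` is represented by `p · Pₘ(-w·z) · exp (w·z)`.
-/

open Filter Topology NormedSpace
open scoped Nat

theorem NormedSpace.exists_exp_eq_one_add_mul {𝔸 : Type*} [NormedRing 𝔸] [NormedAlgebra ℚ 𝔸]
    [CompleteSpace 𝔸] (c : 𝔸) : ∃ h : 𝔸, exp c = 1 + c * h := by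
  have hsummable : Summable fun k : ℕ => ((k + 1)! : ℚ)⁻¹ • c ^ k := by
    refine .of_norm_bounded (norm_expSeries_summable' (𝕂 := ℚ) c) fun k => ?_
    rw [norm_smul, norm_smul]
    gcongr
    simp only [norm_inv, ← Rat.norm_cast_real, Rat.cast_natCast, Real.norm_natCast]
    gcongr
    exact k.le_succ
  refine ⟨∑' k : ℕ, ((k + 1)! : ℚ)⁻¹ • c ^ k, eq_add_of_sub_eq' ?_⟩
  have hshift := (hasSum_nat_add_iff' 1).mpr (exp_series_hasSum_exp' (𝕂 := ℚ) c)
  have hmul : HasSum (fun k : ℕ => ((k + 1)! : ℚ)⁻¹ • c ^ (k + 1))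
      (c * ∑' k : ℕ, ((k + 1)! : ℚ)⁻¹ • c ^ k) := by
    simpa only [mul_smul_comm, ← pow_succ'] using hsummable.hasSum.mul_left c
  simpa using hshift.unique hmul

section ComplexBanachAlgebra

open Polynomial

variable {𝔸 : Type*} [NormedRing 𝔸] [NormedAlgebra ℂ 𝔸] [CompleteSpace 𝔸]

theorem NormedSpace.exists_exp_eq_exp_smul_one_add_mul (b : 𝔸) (t : ℂ) :
    ∃ h : 𝔸, exp b = Complex.exp t • (1 : 𝔸) + (b - t • (1 : 𝔸)) * h := by
  let _ : NormedAlgebra ℚ 𝔸 := NormedAlgebra.restrictScalars ℚ ℂ 𝔸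
  obtain ⟨h, hh⟩ := exists_exp_eq_one_add_mul (b - t • (1 : 𝔸))
  refine ⟨Complex.exp t • h, ?_⟩
  have hexp_scalar : exp (t • (1 : 𝔸)) = Complex.exp t • (1 : 𝔸) := by
    rw [← Algebra.algebraMap_eq_smul_one, ← map_exp (algebraMap ℂ 𝔸) (continuous_algebraMap ℂ 𝔸),
      ← Complex.exp_eq_exp_ℂ, Algebra.algebraMap_eq_smul_one]
  calc exp b = exp (t • (1 : 𝔸) + (b - t • (1 : 𝔸))) := by rw [add_sub_cancel]
    _ = Complex.exp t • (1 : 𝔸) * (1 + (b - t • (1 : 𝔸)) * h) := by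
      rw [exp_add_of_commute ((Commute.one_left _).smul_left t), hexp_scalar, hh]
    _ = _ := by rw [smul_one_mul, smul_add, mul_smul_comm]

theorem NormedSpace.tendsto_aeval_trunc_exp (a : 𝔸) :
    Tendsto (fun m => aeval a (PowerSeries.trunc m (PowerSeries.exp ℂ))) atTop (𝓝 (exp a)) := by
  convert (exp_series_hasSum_exp' (𝕂 := ℂ) a).tendsto_sum_nat using 2 with m
  rw [aeval_def, PowerSeries.eval₂_trunc_eq_sum_range]
  refine Finset.sum_congr rfl fun k _ => ?_
  simp [PowerSeries.coeff_exp, Algebra.smul_def]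

theorem NormedSpace.tendsto_exp_mul_aeval_trunc_exp_neg (a : 𝔸) :
    Tendsto (fun m => exp a * aeval (-a) (PowerSeries.trunc m (PowerSeries.exp ℂ))) atTop
      (𝓝 1) := by
  let _ : NormedAlgebra ℚ 𝔸 := NormedAlgebra.restrictScalars ℚ ℂ 𝔸
  have hinv : exp a * exp (-a) = 1 := by
    rw [← exp_add_of_commute (Commute.neg_right (Commute.refl a)), add_neg_cancel, exp_zero]
  simpa only [hinv] using (tendsto_aeval_trunc_exp (-a)).const_mul (exp a)

end ComplexBanachAlgebra

section MulOperator

open Polynomial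

variable {α E : Type*} [NormedAddCommGroup E] [NormedSpace ℂ E]

def IsMulOperator (J : E →ₗ[ℂ] (α → ℂ)) (f : α → ℂ) (A : E →L[ℂ] E) : Prop :=
  ∀ x z, J (A x) z = f z * J x z

namespace IsMulOperator

variable {J : E →ₗ[ℂ] (α → ℂ)} {f g : α → ℂ} {A B : E →L[ℂ] E}

theorem algebraMap (c : ℂ) :
    IsMulOperator J (fun _ => c) (algebraMap ℂ (E →L[ℂ] E) c) := fun x z => by
  simp [Algebra.algebraMap_eq_smul_one]

theorem add (hA : IsMulOperator J f A) (hB : IsMulOperator J g B) :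
    IsMulOperator J (fun z => f z + g z) (A + B) := fun x z => by
  simp [hA x z, hB x z, add_mul]

theorem mul (hA : IsMulOperator J f A) (hB : IsMulOperator J g B) :
    IsMulOperator J (fun z => f z * g z) (A * B) := fun x z => by
  simp [hA _ z, hB x z, mul_assoc]

theorem const_smul (hA : IsMulOperator J f A) (c : ℂ) :
    IsMulOperator J (fun z => c * f z) (c • A) := fun x z => by
  simp [hA x z, mul_assoc]

theorem neg (hA : IsMulOperator J f A) : IsMulOperator J (fun z => -f z) (-A) := fun x z => by
  simp [hA x z]

theorem sum {ι : Type*} (s : Finset ι) {f : ι → α → ℂ} {A : ι → E →L[ℂ] E}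
    (hA : ∀ i ∈ s, IsMulOperator J (f i) (A i)) :
    IsMulOperator J (fun z => ∑ i ∈ s, f i z) (∑ i ∈ s, A i) := fun x z => by
  simp only [sum_apply, map_sum, Finset.sum_apply, Finset.sum_mul]
  exact Finset.sum_congr rfl fun i hi => hA i hi x z

theorem aeval (hA : IsMulOperator J f A) (P : ℂ[X]) :
    IsMulOperator J (fun z => P.eval (f z)) (aeval A P) := by
  induction P using Polynomial.induction_on with
  | C c => simpa using IsMulOperator.algebraMap c
  | add P Q hP hQ => simpa using hP.add hQ
  | monomial k c hk => simpa [pow_succ, ← mul_assoc] using hk.mul hA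

theorem exp [CompleteSpace E] (hA : IsMulOperator J f A) :
    IsMulOperator J (fun z => Complex.exp (f z)) (exp A) := fun x z => by
  obtain ⟨h, hh⟩ := exists_exp_eq_exp_smul_one_add_mul A (f z)
  have hvanish : J ((A - f z • 1) (h x)) z = 0 := by simp [hA (h x) z]
  rw [hh, add_apply, mul_apply_eq_comp, map_add, Pi.add_apply, hvanish]
  simp

end IsMulOperator

end MulOperator

theorem MvPolynomial.eval_polynomial_aeval {σ R : Type*} [CommRing R] (z : σ → R)
    (L : MvPolynomial σ R) (P : Polynomial R) :
    eval z (Polynomial.aeval L P) = P.eval (eval z L) := by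
  simpa using (Polynomial.aeval_algHom_apply (aeval z) L P).symm

theorem exponential_is_cyclic_general
    (n : ℕ) (X : Type*) [NormedAddCommGroup X] [NormedSpace ℂ X] [CompleteSpace X]
    (J : X →ₗ[ℂ] ((Fin n → ℂ) → ℂ))
    (hdense : Dense {x : X | ∃ p : MvPolynomial (Fin n) ℂ, J x = fun z => MvPolynomial.eval z p})
    (S : Fin n → X →L[ℂ] X) (hS : ∀ i (x : X) (z : Fin n → ℂ), J (S i x) z = z i * J x z) :
    ∀ w : Fin n → ℂ, ∀ E : X,
      (J E = fun z => Complex.exp (∑ i, w i * z i)) →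
      ∀ y : X, ∀ ε : ℝ, 0 < ε → ∃ (q : MvPolynomial (Fin n) ℂ) (g : X),
        (J g = fun z => MvPolynomial.eval z q * Complex.exp (∑ i, w i * z i)) ∧
        ‖y - g‖ < ε := by
  intro w _ _ y ε hε
  obtain ⟨x, ⟨p, hp⟩, hxy⟩ := hdense.exists_dist_lt y hε
  set A : X →L[ℂ] X := ∑ i, w i • S i
  have hA : IsMulOperator J (fun z => ∑ i, w i * z i) A :=
    IsMulOperator.sum _ fun i _ => IsMulOperator.const_smul (hS i) (w i)
  set expTrunc : ℕ → Polynomial ℂ := fun m => PowerSeries.trunc m (PowerSeries.exp ℂ)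
  set T : ℕ → X →L[ℂ] X := fun m => NormedSpace.exp A * Polynomial.aeval (-A) (expTrunc m)
  have hTx : Tendsto (fun m => T m x) atTop (𝓝 x) := by
    simpa [T, expTrunc, Function.comp_def] using
      ((ContinuousLinearMap.apply ℂ X x).continuous.tendsto 1).comp
        (tendsto_exp_mul_aeval_trunc_exp_neg A)
  obtain ⟨m, hm⟩ := ((tendsto_const_nhds.sub hTx).norm.eventually_lt_const
    (by rwa [← dist_eq_norm])).exists
  refine ⟨p * Polynomial.aeval (-∑ i, MvPolynomial.C (w i) * MvPolynomial.X i) (expTrunc m),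
    T m x, ?_, hm⟩
  funext z
  rw [hA.exp.mul (hA.neg.aeval _) x z, hp]
  simp only [map_mul, MvPolynomial.eval_polynomial_aeval, map_neg, map_sum, MvPolynomial.eval_C,
    MvPolynomial.eval_X]
  ring

/-- In a space satisfying Q1–Q3 over a maximal domain `D̂`, every exponential
`exp(w·z)` is a cyclic vector: its polynomial multiples are dense. -/
theorem exponential_is_cyclic
    (n : ℕ) (X : Type*) [NormedAddCommGroup X] [NormedSpace ℂ X] [CompleteSpace X]
    (J : X →ₗ[ℂ] ((Fin n → ℂ) → ℂ)) (hJ : Function.Injective J)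
    (Dhat : Set (Fin n → ℂ))
    (hpoly : ∀ p : MvPolynomial (Fin n) ℂ, ∃ x : X, J x = fun z => MvPolynomial.eval z p)
    (hdense : Dense {x : X | ∃ p : MvPolynomial (Fin n) ℂ, J x = fun z => MvPolynomial.eval z p})
    (hQ2 : ∀ z ∈ Dhat, ∃ C : ℝ, ∀ x : X, ‖J x z‖ ≤ C * ‖x‖)
    (hQ2max : ∀ z : Fin n → ℂ,
      (∃ C : ℝ, ∀ (p : MvPolynomial (Fin n) ℂ) (x : X),
        (J x = fun v => MvPolynomial.eval v p) → ‖MvPolynomial.eval z p‖ ≤ C * ‖x‖) →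
      z ∈ Dhat)
    (S : Fin n → X →L[ℂ] X) (hS : ∀ i (x : X) (z : Fin n → ℂ), J (S i x) z = z i * J x z) :
    ∀ w : Fin n → ℂ, ∀ E : X,
      (J E = fun z => Complex.exp (∑ i, w i * z i)) →
      ∀ y : X, ∀ ε : ℝ, 0 < ε → ∃ (q : MvPolynomial (Fin n) ℂ) (g : X),
        (J g = fun z => MvPolynomial.eval z q * Complex.exp (∑ i, w i * z i)) ∧
        ‖y - g‖ < ε :=
  exponential_is_cyclic_general n X J hdense S hS
end

section
/- Let X be a Banach space of functions on an open set D ⊆ ℂⁿ satisfying P1–P3. A bounded linear functional Λ on X satisfies Λ(pq) = Λ(p)Λ(q) for all polynomials p, q (and Λ(1)=1) if and only if there exists b in the right Harte spectrum of the shift tuple S = (S₁,…,Sₙ) such that Λ(p) = p(b) for every polynomial p. -/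
/-!
Given multiplicativity, `Λ` takes the same value on all representatives of a polynomial `p`
(compare `p` with `p * 1`), and a polynomial induction shows that this value is `p(b)`, where
`b i = Λ (S i 1)`. Multiplicativity with the factor `X i`
makes `Λ ∘ (S i - b i)` vanish on polynomials, hence on all of `X` by density. Then `Λ` kills
every `∑ (S i - b i) A i`, which cannot be the identity since `Λ 1 = 1`: so `b` lies in the right
Harte spectrum.
-/

open MvPolynomial

theorem ContinuousLinearMap.sum_comp_ne_id_of_comp_eq_zero {R M ι : Type*} [Semiring R]
    [TopologicalSpace R] [ContinuousAdd R] [TopologicalSpace M] [AddCommMonoid M] [ContinuousAdd M]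
    [Module R M] [Fintype ι] (φ : M →L[R] R) (hφ : φ ≠ 0) (T A : ι → M →L[R] M)
    (hT : ∀ i, φ.comp (T i) = 0) : ∑ i, (T i).comp (A i) ≠ ContinuousLinearMap.id R M := by
  intro hsum
  apply hφ
  calc φ = φ.comp (∑ i, (T i).comp (A i)) := by rw [hsum, φ.comp_id]
    _ = 0 := by simp [comp_finsetSum, ← comp_assoc, hT]

section PolynomialFunctionSpace

variable {σ 𝕜 E : Type*} [NormedField 𝕜] [NormedAddCommGroup E] [NormedSpace 𝕜 E]

def RepresentsPoly (J : E →ₗ[𝕜] ((σ → 𝕜) → 𝕜)) (p : MvPolynomial σ 𝕜) (x : E) : Prop :=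
  J x = fun z => eval z p

def IsPolyMultiplicative (J : E →ₗ[𝕜] ((σ → 𝕜) → 𝕜)) (Λ : E →L[𝕜] 𝕜) : Prop :=
  ∀ (p q : MvPolynomial σ 𝕜) (xp xq xpq : E), RepresentsPoly J p xp → RepresentsPoly J q xq →
    RepresentsPoly J (p * q) xpq → Λ xpq = Λ xp * Λ xq

variable {J : E →ₗ[𝕜] ((σ → 𝕜) → 𝕜)} {one : E} {S : σ → E →L[𝕜] E} {Λ : E →L[𝕜] 𝕜}

theorem representsPoly_C (hone : J one = fun _ => 1) (a : 𝕜) :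
    RepresentsPoly J (C a) (a • one) := by
  funext z
  simp [hone]

theorem representsPoly_one (hone : J one = fun _ => 1) : RepresentsPoly J 1 one := by
  simpa using representsPoly_C hone 1

theorem representsPoly_add {p q : MvPolynomial σ 𝕜} {x y : E} (hx : RepresentsPoly J p x)
    (hy : RepresentsPoly J q y) : RepresentsPoly J (p + q) (x + y) := by
  unfold RepresentsPoly at *
  rw [map_add, hx, hy]
  funext z
  simp

theorem representsPoly_X_mul (hS : ∀ i x z, J (S i x) z = z i * J x z) {p : MvPolynomial σ 𝕜}
    {x : E} (i : σ) (hx : RepresentsPoly J p x) : RepresentsPoly J (X i * p) (S i x) := by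
  funext z
  rw [hS, hx]
  simp

theorem representsPoly_X (hone : J one = fun _ => 1) (hS : ∀ i x z, J (S i x) z = z i * J x z)
    (i : σ) : RepresentsPoly J (X i) (S i one) := by
  simpa using representsPoly_X_mul hS i (representsPoly_one hone)

namespace IsPolyMultiplicative

theorem apply_eq_of_representsPoly (hmul : IsPolyMultiplicative J Λ) (hone : J one = fun _ => 1)
    (hΛone : Λ one = 1) {p : MvPolynomial σ 𝕜} {x y : E} (hx : RepresentsPoly J p x)
    (hy : RepresentsPoly J p y) : Λ x = Λ y := by
  rw [hmul p 1 y one x hy (representsPoly_one hone) (by rwa [mul_one]), hΛone, mul_one]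

theorem exists_representsPoly_apply_eq_eval (hmul : IsPolyMultiplicative J Λ)
    (hone : J one = fun _ => 1) (hS : ∀ i x z, J (S i x) z = z i * J x z) (hΛone : Λ one = 1)
    (p : MvPolynomial σ 𝕜) : ∃ x, RepresentsPoly J p x ∧ Λ x = eval (fun i => Λ (S i one)) p := by
  induction p using MvPolynomial.induction_on with
  | C a => exact ⟨a • one, representsPoly_C hone a, by simp [hΛone]⟩
  | add p q hp hq =>
    obtain ⟨x, hx, hΛx⟩ := hp
    obtain ⟨y, hy, hΛy⟩ := hq
    exact ⟨x + y, representsPoly_add hx hy, by simp [hΛx, hΛy]⟩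
  | mul_X p i hp =>
    obtain ⟨x, hx, hΛx⟩ := hp
    have hSx := representsPoly_X_mul hS i hx
    refine ⟨S i x, mul_comm (X i) p ▸ hSx, ?_⟩
    rw [hmul _ _ _ _ _ (representsPoly_X hone hS i) hx hSx, hΛx, eval_mul, eval_X, mul_comm]

theorem apply_eq_eval (hmul : IsPolyMultiplicative J Λ) (hone : J one = fun _ => 1)
    (hS : ∀ i x z, J (S i x) z = z i * J x z) (hΛone : Λ one = 1) {p : MvPolynomial σ 𝕜} {x : E}
    (hx : RepresentsPoly J p x) : Λ x = eval (fun i => Λ (S i one)) p := by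
  obtain ⟨y, hy, hΛy⟩ := hmul.exists_representsPoly_apply_eq_eval hone hS hΛone p
  rw [hmul.apply_eq_of_representsPoly hone hΛone hx hy, hΛy]

theorem comp_shift_sub_eq_zero (hmul : IsPolyMultiplicative J Λ) (hone : J one = fun _ => 1)
    (hS : ∀ i x z, J (S i x) z = z i * J x z) (hdense : Dense {x | ∃ p, RepresentsPoly J p x})
    (i : σ) : Λ.comp (S i - Λ (S i one) • ContinuousLinearMap.id 𝕜 E) = 0 := by
  refine ContinuousLinearMap.ext_on (hdense.mono Submodule.subset_span) ?_
  rintro x ⟨p, hx⟩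
  have hΛSx := hmul _ _ _ _ _ (representsPoly_X hone hS i) hx (representsPoly_X_mul hS i hx)
  simp [hΛSx]

end IsPolyMultiplicative

theorem isPolyMultiplicative_of_forall_apply_eq_eval (b : σ → 𝕜)
    (h : ∀ p x, RepresentsPoly J p x → Λ x = eval b p) : IsPolyMultiplicative J Λ := by
  intro p q xp xq xpq hp hq hpq
  rw [h _ _ hp, h _ _ hq, h _ _ hpq, eval_mul]

end PolynomialFunctionSpace

theorem m0_iff_point_evaluation_in_right_harte_spectrum_general
    (n : ℕ) (X : Type*) [NormedAddCommGroup X] [NormedSpace ℂ X]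
    (J : X →ₗ[ℂ] ((Fin n → ℂ) → ℂ))
    (hdense : Dense {x : X | ∃ p : MvPolynomial (Fin n) ℂ, J x = fun z => MvPolynomial.eval z p})
    (S : Fin n → X →L[ℂ] X) (hS : ∀ i (x : X) (z : Fin n → ℂ), J (S i x) z = z i * J x z)
    (one : X) (hone : J one = fun _ => 1)
    (Λ : X →L[ℂ] ℂ) (hΛone : Λ one = 1) :
    (∀ (p q : MvPolynomial (Fin n) ℂ) (xp xq xpq : X),
        (J xp = fun z => MvPolynomial.eval z p) →
        (J xq = fun z => MvPolynomial.eval z q) →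
        (J xpq = fun z => MvPolynomial.eval z (p * q)) →
        Λ xpq = Λ xp * Λ xq) ↔
      ∃ b : Fin n → ℂ,
        (¬ ∃ A : Fin n → (X →L[ℂ] X),
          (∑ i, ((S i) - (b i) • (ContinuousLinearMap.id ℂ X)).comp (A i)) =
            ContinuousLinearMap.id ℂ X) ∧
        ∀ (p : MvPolynomial (Fin n) ℂ) (x : X),
          (J x = fun z => MvPolynomial.eval z p) → Λ x = MvPolynomial.eval b p := by
  refine ⟨fun (hmul : IsPolyMultiplicative J Λ) => ?_,
    fun ⟨b, _, hb⟩ => isPolyMultiplicative_of_forall_apply_eq_eval b hb⟩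
  refine ⟨fun i => Λ (S i one), ?_, fun p x hx => hmul.apply_eq_eval hone hS hΛone hx⟩
  rintro ⟨A, hA⟩
  have hΛ : Λ ≠ 0 := fun h => by simp [h] at hΛone
  exact Λ.sum_comp_ne_id_of_comp_eq_zero hΛ _ A (hmul.comp_shift_sub_eq_zero hone hS hdense) hA

/-- A unital bounded functional is multiplicative on polynomials (M0) iff it is
evaluation at some point `b` of the right Harte spectrum of the shift tuple. -/
theorem m0_iff_point_evaluation_in_right_harte_spectrum
    (n : ℕ) (X : Type*) [NormedAddCommGroup X] [NormedSpace ℂ X] [CompleteSpace X]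
    (J : X →ₗ[ℂ] ((Fin n → ℂ) → ℂ)) (hJ : Function.Injective J)
    (D : Set (Fin n → ℂ)) (hD : IsOpen D)
    (hpoly : ∀ p : MvPolynomial (Fin n) ℂ, ∃ x : X, J x = fun z => MvPolynomial.eval z p)
    (hdense : Dense {x : X | ∃ p : MvPolynomial (Fin n) ℂ, J x = fun z => MvPolynomial.eval z p})
    (hP2 : ∀ z ∈ D, ∃ C : ℝ, ∀ x : X, ‖J x z‖ ≤ C * ‖x‖)
    (S : Fin n → X →L[ℂ] X) (hS : ∀ i (x : X) (z : Fin n → ℂ), J (S i x) z = z i * J x z)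
    (one : X) (hone : J one = fun _ => 1)
    (Λ : X →L[ℂ] ℂ) (hΛone : Λ one = 1) :
    (∀ (p q : MvPolynomial (Fin n) ℂ) (xp xq xpq : X),
        (J xp = fun z => MvPolynomial.eval z p) →
        (J xq = fun z => MvPolynomial.eval z q) →
        (J xpq = fun z => MvPolynomial.eval z (p * q)) →
        Λ xpq = Λ xp * Λ xq) ↔
      ∃ b : Fin n → ℂ,
        (¬ ∃ A : Fin n → (X →L[ℂ] X),
          (∑ i, ((S i) - (b i) • (ContinuousLinearMap.id ℂ X)).comp (A i)) =
            ContinuousLinearMap.id ℂ X) ∧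
        ∀ (p : MvPolynomial (Fin n) ℂ) (x : X),
          (J x = fun z => MvPolynomial.eval z p) → Λ x = MvPolynomial.eval b p :=
  m0_iff_point_evaluation_in_right_harte_spectrum_general n X J hdense S hS one hone Λ hΛone
end

section
/- The map T : H²(𝔻²) → H^q(𝔻) defined by (Tf)(z) = f((1+z)/2, (1+z)/2) sends the outer function f(z₁,z₂) = exp((z₁+z₂+2)/(z₁+z₂−2)) to the function z ↦ exp((z+3)/(z−1)), which is not outer in H^q(𝔻) for 0 < q < 1/2; in particular, the singular inner-type factor exp((z+3)/(z−1)) belongs to H^q(𝔻) and has modulus bounded by 1 on 𝔻 but fails log|g(0)| = ∫_𝕋 log|g|. -/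
open MeasureTheory

/-!
Fix `ζ₁` on the unit circle with `ζ₁ ≠ 1`. Then `ζ₂ ↦ f (ζ₁, ζ₂)` is holomorphic and zero-free near
the closed unit disc, so by the mean value property of `log ‖·‖` its circle average is
`log ‖f (ζ₁, 0)‖`; averaging once more in `ζ₁` gives `log ‖f (0, 0)‖`. Fubini applies because
`log ‖f‖ ≤ 0` on the torus and the iterated integral is finite. For `g`,
`log ‖g‖ = re ((ζ + 3) / (ζ - 1)) = -1` on the circle minus `{1}`, whereas `log ‖g 0‖ = -3`.
Both `‖f‖` and `‖g‖` are at most `1` because `re ((w + a) / (w - a)) ≤ 0` for `‖w‖ ≤ a`, and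
bounded holomorphic functions lie in every `H^p`.
-/

open Real Set

namespace Complex

theorem re_add_div_sub (w : ℂ) (a : ℝ) :
    ((w + a) / (w - a)).re = (‖w‖ ^ 2 - a ^ 2) / ‖w - a‖ ^ 2 := by
  rw [div_re, ← add_div, ← normSq_eq_norm_sq, ← normSq_eq_norm_sq, normSq_apply, normSq_apply]
  congr 1
  simp only [add_re, add_im, sub_re, sub_im, ofReal_re, ofReal_im]
  ring

theorem re_add_div_sub_nonpos {w : ℂ} {a : ℝ} (h : ‖w‖ ≤ a) : ((w + a) / (w - a)).re ≤ 0 := by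
  rw [re_add_div_sub]
  have : ‖w‖ ^ 2 ≤ a ^ 2 := pow_le_pow_left₀ (norm_nonneg w) h 2
  exact div_nonpos_of_nonpos_of_nonneg (by linarith) (sq_nonneg _)

theorem norm_exp_add_div_sub_le_one {w : ℂ} {a : ℝ} (h : ‖w‖ ≤ a) :
    ‖exp ((w + a) / (w - a))‖ ≤ 1 := by
  rw [norm_exp, Real.exp_le_one_iff]
  exact re_add_div_sub_nonpos h

theorem add_three_div_sub_one (z : ℂ) :
    (z + 3) / (z - 1) = (z + 1 + (2 : ℝ)) / (z + 1 - (2 : ℝ)) := by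
  push_cast
  ring_nf

theorem re_add_three_div_sub_one {z : ℂ} (hz : ‖z‖ = 1) (hz1 : z ≠ 1) :
    ((z + 3) / (z - 1)).re = -1 := by
  have hnormSq : z.re ^ 2 + z.im ^ 2 = 1 := by
    have := normSq_apply z
    rw [normSq_eq_norm_sq, hz] at this
    linarith
  have hsub : ‖z - 1‖ ^ 2 = 2 - 2 * z.re := by
    rw [← normSq_eq_norm_sq, normSq_apply]
    simp only [sub_re, sub_im, one_re, one_im]
    linear_combination hnormSq
  have hadd : ‖z + 1‖ ^ 2 = 2 + 2 * z.re := by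
    rw [← normSq_eq_norm_sq, normSq_apply]
    simp only [add_re, add_im, one_re, one_im]
    linear_combination hnormSq
  have hpos : 0 < 2 - 2 * z.re := hsub ▸ by positivity [sub_ne_zero.mpr hz1]
  rw [add_three_div_sub_one, re_add_div_sub, hadd, show z + 1 - ((2 : ℝ) : ℂ) = z - 1 by
    push_cast; ring, hsub, div_eq_iff hpos.ne']
  ring

theorem log_norm_exp (w : ℂ) : Real.log ‖exp w‖ = w.re := by
  rw [norm_exp, Real.log_exp]

theorem add_ne_two {a ζ : ℂ} (ha : ‖a‖ ≤ 1) (hζ : ‖ζ‖ ≤ 1) (ha1 : a ≠ 1) : a + ζ ≠ 2 := by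
  intro h
  have hre : a.re + ζ.re = 2 := by simpa using congrArg re h
  have hζre : ζ.re ≤ 1 := (re_le_norm ζ).trans hζ
  have hnormSq : a.re * a.re + a.im * a.im ≤ 1 := by
    rw [← normSq_apply, normSq_eq_norm_sq]
    nlinarith [norm_nonneg a]
  have hare : a.re = 1 := by nlinarith [sq_nonneg a.im]
  have haim : a.im = 0 := by nlinarith [sq_nonneg a.im]
  exact ha1 (ext (by simpa using hare) (by simpa using haim))

theorem norm_exp_add_three_div_sub_one_le_one {z : ℂ} (hz : ‖z‖ ≤ 1) :
    ‖exp ((z + 3) / (z - 1))‖ ≤ 1 := by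
  rw [add_three_div_sub_one]
  exact norm_exp_add_div_sub_le_one ((norm_add_le z 1).trans (by norm_num; linarith))

end Complex

theorem memHardy_of_norm_le {p : ℝ} (hp : 0 ≤ p) {n : ℕ} {f : (Fin n → ℂ) → ℂ} {C : ℝ}
    (hf : DifferentiableOn ℂ f (polydisc n)) (hC : ∀ z ∈ polydisc n, ‖f z‖ ≤ C) :
    MemHardy p n f := by
  set T := univ.pi fun _ : Fin n => Ico (0 : ℝ) (2 * π)
  have hT : volume T < ⊤ := by
    simp [T, volume_pi_pi, Real.volume_Ico, ENNReal.mul_lt_top]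
  refine ⟨hf, C ^ p / (2 * π) ^ n * volume.real T, fun r hr => ?_⟩
  have hrθ (θ : Fin n → ℝ) : (fun i => (r : ℂ) * Complex.exp (Complex.I * θ i)) ∈ polydisc n := by
    intro i
    rw [norm_mul, Complex.norm_exp_I_mul_ofReal, Complex.norm_real, Real.norm_of_nonneg hr.1]
    linarith [hr.2]
  refine (Real.le_norm_self _).trans ((norm_setIntegral_le_of_norm_le_const hT fun θ _ => ?_))
  rw [Real.norm_of_nonneg (by positivity)]
  gcongr
  exact hC _ (hrθ θ)

theorem setIntegral_Ico_eq_circleAverage {E : Type*} [NormedAddCommGroup E] [NormedSpace ℝ E]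
    (F : ℂ → E) :
    ∫ θ in Ico 0 (2 * π), F (Complex.exp (Complex.I * θ)) = (2 * π) • circleAverage F 0 1 := by
  have hcircle (θ : ℝ) : circleMap 0 1 θ = Complex.exp (Complex.I * θ) := by
    rw [circleMap_zero, Complex.ofReal_one, one_mul, mul_comm]
  simp_rw [circleAverage_def, hcircle, smul_inv_smul₀ two_pi_pos.ne',
    intervalIntegral.integral_of_le two_pi_pos.le, integral_Ico_eq_integral_Ioc]

theorem ae_restrict_Ico_exp_I_mul_ne_one :
    ∀ᵐ θ : ℝ ∂volume.restrict (Ico 0 (2 * π)), Complex.exp (Complex.I * θ) ≠ 1 := by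
  rw [← Measure.restrict_congr_set Ioo_ae_eq_Ico]
  filter_upwards [ae_restrict_mem measurableSet_Ioo] with θ ⟨h0, h2π⟩ h
  have hcos : Real.cos θ = 1 := by
    rw [← Complex.exp_ofReal_mul_I_re, mul_comm, h, Complex.one_re]
  rw [Real.cos_eq_one_iff_of_lt_of_lt (by linarith [pi_pos]) h2π] at hcos
  exact h0.ne' hcos

theorem integrable_prod_of_nonpos {α β : Type*} [MeasurableSpace α] [MeasurableSpace β]
    {μ : Measure α} {ν : Measure β} [SFinite ν] {F : α × β → ℝ} {G : α → ℝ}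
    (hFm : AEStronglyMeasurable F (μ.prod ν)) (hF : ∀ p, F p ≤ 0)
    (hint : ∀ᵐ x ∂μ, Integrable (fun y => F (x, y)) ν) (hG : Integrable G μ)
    (hFG : ∀ᵐ x ∂μ, ∫ y, F (x, y) ∂ν = G x) : Integrable F (μ.prod ν) := by
  refine (integrable_prod_iff hFm).2 ⟨hint, hG.neg.congr ?_⟩
  filter_upwards [hFG] with x hx
  simp_rw [Real.norm_of_nonpos (hF _), integral_neg, hx, Pi.neg_apply]

theorem setIntegral_torus_eq_circleAverage_circleAverage (F : ℂ → ℂ → ℝ)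
    (hF : IntegrableOn (fun θ : ℝ × ℝ => F (Complex.exp (Complex.I * θ.1))
      (Complex.exp (Complex.I * θ.2))) (Ico 0 (2 * π) ×ˢ Ico 0 (2 * π))) :
    ∫ θ : Fin 2 → ℝ in univ.pi fun _ => Ico 0 (2 * π),
        F (Complex.exp (Complex.I * θ 0)) (Complex.exp (Complex.I * θ 1)) / (2 * π) ^ 2 =
      circleAverage (fun ζ => circleAverage (F ζ) 0 1) 0 1 := by
  let e := MeasurableEquiv.piFinTwo fun _ : Fin 2 => ℝ
  have hpre : univ.pi (fun _ : Fin 2 => Ico (0 : ℝ) (2 * π)) =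
      e ⁻¹' (Ico 0 (2 * π) ×ˢ Ico 0 (2 * π)) := by
    ext θ
    simp [e, Fin.forall_fin_two]
  have hprod : ∫ θ : Fin 2 → ℝ in e ⁻¹' (Ico 0 (2 * π) ×ˢ Ico 0 (2 * π)),
        F (Complex.exp (Complex.I * θ 0)) (Complex.exp (Complex.I * θ 1)) =
      ∫ θ : ℝ × ℝ in Ico 0 (2 * π) ×ˢ Ico 0 (2 * π),
        F (Complex.exp (Complex.I * θ.1)) (Complex.exp (Complex.I * θ.2)) :=
    (volume_preserving_piFinTwo fun _ => ℝ).setIntegral_preimage_emb e.measurableEmbedding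
      (fun θ : ℝ × ℝ => F (Complex.exp (Complex.I * θ.1)) (Complex.exp (Complex.I * θ.2))) _
  rw [hpre, integral_div, hprod, Measure.volume_eq_prod, setIntegral_prod _ hF]
  simp_rw [setIntegral_Ico_eq_circleAverage (F _), smul_eq_mul, integral_const_mul,
    setIntegral_Ico_eq_circleAverage fun ζ => circleAverage (F ζ) 0 1, smul_eq_mul]
  field_simp

theorem analyticOnNhd_add_div_add_sub_two {a : ℂ} (ha : ‖a‖ ≤ 1) (ha1 : a ≠ 1) :
    AnalyticOnNhd ℂ (fun ζ => (a + ζ + 2) / (a + ζ - 2)) (Metric.closedBall 0 1) := by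
  intro ζ hζ
  have hden : a + ζ - 2 ≠ 0 :=
    sub_ne_zero.2 (Complex.add_ne_two ha (by simpa using hζ) ha1)
  fun_prop (disch := exact hden)

theorem circleAverage_log_norm_exp_add_div_add_sub_two {a : ℂ} (ha : ‖a‖ ≤ 1) (ha1 : a ≠ 1) :
    circleAverage (fun ζ => Real.log ‖Complex.exp ((a + ζ + 2) / (a + ζ - 2))‖) 0 1 =
      Real.log ‖Complex.exp ((a + 2) / (a - 2))‖ := by
  have := AnalyticOnNhd.circleAverage_log_norm_of_ne_zero (c := 0) (R := 1)
    (g := fun ζ => Complex.exp ((a + ζ + 2) / (a + ζ - 2)))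
    (fun ζ hζ => (analyticOnNhd_add_div_add_sub_two ha ha1 ζ (by simpa using hζ)).cexp)
    (fun _ _ => Complex.exp_ne_zero _)
  simpa using this

theorem continuous_log_norm_exp_add_div_add_sub_two {a : ℂ} (ha : ‖a‖ ≤ 1) (ha1 : a ≠ 1) :
    Continuous fun θ : ℝ => Real.log ‖Complex.exp
      ((a + Complex.exp (Complex.I * θ) + 2) / (a + Complex.exp (Complex.I * θ) - 2))‖ := by
  have hden (θ : ℝ) : a + Complex.exp (Complex.I * θ) - 2 ≠ 0 :=
    sub_ne_zero.2 (Complex.add_ne_two ha (Complex.norm_exp_I_mul_ofReal θ).le ha1)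
  simp_rw [Complex.log_norm_exp]
  fun_prop (disch := exact hden _)

theorem integrableOn_log_norm_exp_add_div_add_sub_two_torus :
    IntegrableOn (fun θ : ℝ × ℝ => Real.log ‖Complex.exp
      ((Complex.exp (Complex.I * θ.1) + Complex.exp (Complex.I * θ.2) + 2) /
        (Complex.exp (Complex.I * θ.1) + Complex.exp (Complex.I * θ.2) - 2))‖)
      (Ico 0 (2 * π) ×ˢ Ico 0 (2 * π)) := by
  rw [IntegrableOn, Measure.volume_eq_prod, ← Measure.prod_restrict]
  refine integrable_prod_of_nonpos (G := fun θ => 2 * π * Real.log ‖Complex.exp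
    ((0 + Complex.exp (Complex.I * θ) + 2) / (0 + Complex.exp (Complex.I * θ) - 2))‖)
    (by fun_prop : Measurable _).aestronglyMeasurable (fun θ => ?_) ?_ ?_ ?_
  · have hsum : ‖Complex.exp (Complex.I * θ.1) + Complex.exp (Complex.I * θ.2)‖ ≤ (2 : ℝ) :=
      (norm_add_le _ _).trans (by simp [Complex.norm_exp_I_mul_ofReal]; norm_num)
    rw [Complex.log_norm_exp]
    exact_mod_cast Complex.re_add_div_sub_nonpos hsum
  · filter_upwards [ae_restrict_Ico_exp_I_mul_ne_one] with θ hθ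
    exact ((continuous_log_norm_exp_add_div_add_sub_two
      (Complex.norm_exp_I_mul_ofReal θ).le hθ).integrableOn_Icc).mono_set Ico_subset_Icc_self
  · exact (continuous_const.mul (continuous_log_norm_exp_add_div_add_sub_two (by simp)
      zero_ne_one)).integrableOn_Icc.mono_set Ico_subset_Icc_self
  · filter_upwards [ae_restrict_Ico_exp_I_mul_ne_one] with θ hθ
    rw [setIntegral_Ico_eq_circleAverage (fun ζ => Real.log ‖Complex.exp
      ((Complex.exp (Complex.I * θ) + ζ + 2) / (Complex.exp (Complex.I * θ) + ζ - 2))‖),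
      circleAverage_log_norm_exp_add_div_add_sub_two (Complex.norm_exp_I_mul_ofReal θ).le hθ,
      smul_eq_mul, zero_add]

theorem log_norm_exp_add_div_add_sub_two_zero_eq_setIntegral_torus :
    Real.log ‖Complex.exp ((0 + 0 + 2) / (0 + 0 - 2))‖ =
      ∫ θ : Fin 2 → ℝ in univ.pi fun _ => Ico 0 (2 * π),
        Real.log ‖Complex.exp
          ((Complex.exp (Complex.I * θ 0) + Complex.exp (Complex.I * θ 1) + 2) /
            (Complex.exp (Complex.I * θ 0) + Complex.exp (Complex.I * θ 1) - 2))‖ / (2 * π) ^ 2 := by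
  rw [setIntegral_torus_eq_circleAverage_circleAverage
    (fun ζ₁ ζ₂ => Real.log ‖Complex.exp ((ζ₁ + ζ₂ + 2) / (ζ₁ + ζ₂ - 2))‖)
    integrableOn_log_norm_exp_add_div_add_sub_two_torus]
  have hinner : (fun ζ => circleAverage
      (fun ζ₂ => Real.log ‖Complex.exp ((ζ + ζ₂ + 2) / (ζ + ζ₂ - 2))‖) 0 1) =ᶠ[Filter.codiscreteWithin
        (Metric.sphere 0 |1|)] fun ζ => Real.log ‖Complex.exp ((0 + ζ + 2) / (0 + ζ - 2))‖ := by
    filter_upwards [Filter.self_mem_codiscreteWithin _, compl_singleton_mem_codiscreteWithin 1]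
      with ζ hζ hζ1
    rw [circleAverage_log_norm_exp_add_div_add_sub_two (by simp_all) hζ1, zero_add]
  rw [circleAverage_congr_codiscreteWithin hinner one_ne_zero,
    circleAverage_log_norm_exp_add_div_add_sub_two (by simp) zero_ne_one]
  simp

theorem setIntegral_log_norm_exp_add_three_div_sub_one :
    ∫ θ in Ico 0 (2 * π), Real.log ‖Complex.exp
      ((Complex.exp (Complex.I * θ) + 3) / (Complex.exp (Complex.I * θ) - 1))‖ / (2 * π) = -1 := by
  have hboundary : (fun ζ : ℂ => Real.log ‖Complex.exp ((ζ + 3) / (ζ - 1))‖) =ᶠ[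
      Filter.codiscreteWithin (Metric.sphere 0 |1|)] fun _ => -1 := by
    filter_upwards [Filter.self_mem_codiscreteWithin _, compl_singleton_mem_codiscreteWithin 1]
      with ζ hζ hζ1
    rw [Complex.log_norm_exp, Complex.re_add_three_div_sub_one (by simpa using hζ) hζ1]
  rw [integral_div, setIntegral_Ico_eq_circleAverage (fun ζ => Real.log ‖Complex.exp
    ((ζ + 3) / (ζ - 1))‖), circleAverage_congr_codiscreteWithin hboundary one_ne_zero,
    circleAverage_const, smul_eq_mul]
  field_simp [two_pi_pos.ne']

theorem composition_outer_not_preserved_general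
    (q : ℝ) (hq0 : 0 < q)
    (f : (Fin 2 → ℂ) → ℂ)
    (hf : f = fun z => Complex.exp ((z 0 + z 1 + 2) / (z 0 + z 1 - 2)))
    (g : (Fin 1 → ℂ) → ℂ)
    (hg : g = fun z => Complex.exp ((z 0 + 3) / (z 0 - 1))) :
    -- T sends f to g
    (∀ z : Fin 1 → ℂ, g z = f (fun _ => (1 + z 0) / 2)) ∧
    -- f is outer in H²(𝔻²)
    MemHardy 2 2 f ∧
    Real.log ‖f (fun _ => 0)‖ =
      (∫ θ : Fin 2 → ℝ in Set.univ.pi (fun _ => Set.Ico (0 : ℝ) (2 * Real.pi)),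
        Real.log ‖f (fun i => Complex.exp (Complex.I * θ i))‖ / (2 * Real.pi) ^ 2) ∧
    -- g belongs to H^q(𝔻) and has modulus at most 1 on 𝔻
    MemHardy q 1 g ∧
    (∀ z : Fin 1 → ℂ, ‖z 0‖ < 1 → ‖g z‖ ≤ 1) ∧
    -- but g is not outer
    Real.log ‖g (fun _ => 0)‖ ≠
      (∫ θ : ℝ in Set.Ico (0 : ℝ) (2 * Real.pi),
        Real.log ‖g (fun _ => Complex.exp (Complex.I * θ))‖ / (2 * Real.pi)) := by
  subst hf hg
  have hne_one {z : ℂ} (hz : ‖z‖ < 1) : z ≠ 1 := by rintro rfl; simp at hz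
  refine ⟨fun z => ?_, memHardy_of_norm_le (C := 1) two_pos.le (fun z hz => ?_) (fun z hz => ?_),
    log_norm_exp_add_div_add_sub_two_zero_eq_setIntegral_torus,
    memHardy_of_norm_le hq0.le (fun z hz => ?_) (fun z hz =>
      Complex.norm_exp_add_three_div_sub_one_le_one (hz 0).le),
    fun z hz => Complex.norm_exp_add_three_div_sub_one_le_one hz.le, ?_⟩
  · dsimp only
    congr 1
    ring
  · have hden : z 0 + z 1 - 2 ≠ 0 :=
      sub_ne_zero.2 (Complex.add_ne_two (hz 0).le (hz 1).le (hne_one (hz 0)))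
    exact (by fun_prop (disch := exact hden) : DifferentiableAt ℂ _ z).differentiableWithinAt
  · have hsum : ‖z 0 + z 1‖ ≤ (2 : ℝ) :=
      (norm_add_le _ _).trans (by linarith [(hz 0).le, (hz 1).le])
    exact_mod_cast Complex.norm_exp_add_div_sub_le_one hsum
  · have hden : z 0 - 1 ≠ 0 := sub_ne_zero.2 (hne_one (hz 0))
    exact (by fun_prop (disch := exact hden) : DifferentiableAt ℂ _ z).differentiableWithinAt
  · rw [setIntegral_log_norm_exp_add_three_div_sub_one, Complex.log_norm_exp]
    norm_num

/-- The composition operator `(Tf)(z) = f((1+z)/2, (1+z)/2)` from `H²(𝔻²)` to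
`H^q(𝔻)` (for `0 < q < 1/2`) sends the outer function
`f(z₁,z₂) = exp((z₁+z₂+2)/(z₁+z₂−2))` to `g(z) = exp((z+3)/(z−1))`, which belongs
to `H^q(𝔻)`, has modulus at most `1` on `𝔻`, yet is not outer. -/
theorem composition_outer_not_preserved
    (q : ℝ) (hq0 : 0 < q) (hq : q < 1 / 2)
    (f : (Fin 2 → ℂ) → ℂ)
    (hf : f = fun z => Complex.exp ((z 0 + z 1 + 2) / (z 0 + z 1 - 2)))
    (g : (Fin 1 → ℂ) → ℂ)
    (hg : g = fun z => Complex.exp ((z 0 + 3) / (z 0 - 1))) :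
    -- T sends f to g
    (∀ z : Fin 1 → ℂ, g z = f (fun _ => (1 + z 0) / 2)) ∧
    -- f is outer in H²(𝔻²)
    MemHardy 2 2 f ∧
    Real.log ‖f (fun _ => 0)‖ =
      (∫ θ : Fin 2 → ℝ in Set.univ.pi (fun _ => Set.Ico (0 : ℝ) (2 * Real.pi)),
        Real.log ‖f (fun i => Complex.exp (Complex.I * θ i))‖ / (2 * Real.pi) ^ 2) ∧
    -- g belongs to H^q(𝔻) and has modulus at most 1 on 𝔻
    MemHardy q 1 g ∧
    (∀ z : Fin 1 → ℂ, ‖z 0‖ < 1 → ‖g z‖ ≤ 1) ∧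
    -- but g is not outer
    Real.log ‖g (fun _ => 0)‖ ≠
      (∫ θ : ℝ in Set.Ico (0 : ℝ) (2 * Real.pi),
        Real.log ‖g (fun _ => Complex.exp (Complex.I * θ))‖ / (2 * Real.pi)) :=
  composition_outer_not_preserved_general q hq0 f hf g hg
end
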